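/- arXiv:0903.0645 — 9 statements merged into one kernel-verified Lean document; each statement's English description precedes it below -/
import Mathlib

section
/- Let Σ be a real positive definite p×p matrix with modified Cholesky decomposition Σ = L D Lᵀ, where L is lower triangular with unit diagonal and D is diagonal. Then for any row index i and any c < i, the entries σ_{i,1} = σ_{i,2} = ⋯ = σ_{i,c} = 0 if and only if l_{i,1} = l_{i,2} = ⋯ = l_{i,c} = 0; that is, (∀ m ≤ c, σ_{i,m} = 0) ↔ (∀ m ≤ c, l_{i,m} = 0). -/
/-!
Since `L` is lower triangular, `σ_{im} = ∑_{k ≤ m} l_{ik} d_k l_{mk}`. Hence, as soon as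
`l_{ik} = 0` for all `k < m`, only the term `k = m` survives and `σ_{im} = l_{im} d_m`.
The pivots `d_m` are nonzero because `det Σ = det D = ∏ d_k` is positive, so by strong
induction on `m` the two rows vanish on the same initial segments.
-/

open Matrix

namespace Matrix

variable {n R : Type*} [Fintype n] [DecidableEq n]

theorem IsDiag.apply_self_ne_zero_of_det_ne_zero [CommRing R] [Nontrivial R] [NoZeroDivisors R]
    {D : Matrix n n R} (hD : D.IsDiag) (hdet : D.det ≠ 0) (m : n) : D m m ≠ 0 := by
  rw [← hD.diagonal_diag, det_diagonal, Finset.prod_ne_zero_iff] at hdet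
  exact hdet m (Finset.mem_univ m)

variable [LinearOrder n] [CommSemiring R] {L D : Matrix n n R}

theorem ldlT_apply_of_forall_lt_eq_zero (hL : L.BlockTriangular OrderDual.toDual)
    (hD : D.IsDiag) {i m : n} (hm : ∀ k < m, L i k = 0) :
    (L * D * Lᵀ) i m = L i m * D m m * L m m := by
  rw [← hD.diagonal_diag, mul_apply]
  simp only [mul_diagonal, transpose_apply, diagonal_apply_eq, diag_apply]
  refine Finset.sum_eq_single m (fun k _ hkm => ?_) fun h => (h (Finset.mem_univ m)).elim
  rcases hkm.lt_or_gt with hk | hk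
  · rw [hm k hk, zero_mul, zero_mul]
  · rw [hL hk, mul_zero]

theorem ldlT_row_prefix_eq_zero_iff [NoZeroDivisors R] (hL : L.BlockTriangular OrderDual.toDual)
    (hD : D.IsDiag) (hLdiag : ∀ m, L m m ≠ 0) (hDdiag : ∀ m, D m m ≠ 0) (i c : n) :
    (∀ m ≤ c, (L * D * Lᵀ) i m = 0) ↔ (∀ m ≤ c, L i m = 0) := by
  constructor
  · intro hS m
    induction m using WellFoundedLT.induction with
    | _ m ih =>
      intro hmc
      have hSm := hS m hmc
      rw [ldlT_apply_of_forall_lt_eq_zero hL hD fun k hk => ih k hk (hk.le.trans hmc)] at hSm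
      simpa [hLdiag m, hDdiag m] using hSm
  · intro hLi m hmc
    rw [ldlT_apply_of_forall_lt_eq_zero hL hD fun k hk => hLi k (hk.le.trans hmc), hLi m hmc,
      zero_mul, zero_mul]

end Matrix

theorem cholesky_row_zero_iff_general
    (p : ℕ) (S L D : Matrix (Fin p) (Fin p) ℝ)
    (hS : S.PosDef)
    (hL_lower : ∀ i j : Fin p, i < j → L i j = 0)
    (hL_diag : ∀ i : Fin p, L i i = 1)
    (hD_diag : ∀ i j : Fin p, i ≠ j → D i j = 0)
    (hdecomp : S = L * D * Lᵀ)
    (i c : Fin p) :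
    (∀ m : Fin p, m ≤ c → S i m = 0) ↔ (∀ m : Fin p, m ≤ c → L i m = 0) := by
  have hD : D.IsDiag := hD_diag
  have hdetD : D.det ≠ 0 := by
    have hdetS := hS.det_pos.ne'
    rw [hdecomp, det_mul, det_mul] at hdetS
    exact right_ne_zero_of_mul (left_ne_zero_of_mul hdetS)
  subst hdecomp
  exact ldlT_row_prefix_eq_zero_iff (fun a b h => hL_lower a b h) hD
    (fun m => by simp [hL_diag m]) (hD.apply_self_ne_zero_of_det_ne_zero hdetD) i c

/-- For a positive definite `Σ = L D Lᵀ` (modified Cholesky decomposition),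
a leading segment of zeros in a row of `Σ` below the diagonal corresponds exactly to a
leading segment of zeros in the same row of `L`. (Indices are 0-based.) -/
theorem cholesky_row_zero_iff
    (p : ℕ) (S L D : Matrix (Fin p) (Fin p) ℝ)
    (hS : S.PosDef)
    (hL_lower : ∀ i j : Fin p, i < j → L i j = 0)
    (hL_diag : ∀ i : Fin p, L i i = 1)
    (hD_diag : ∀ i j : Fin p, i ≠ j → D i j = 0)
    (hdecomp : S = L * D * Lᵀ)
    (i c : Fin p) (hci : c < i) :
    (∀ m : Fin p, m ≤ c → S i m = 0) ↔ (∀ m : Fin p, m ≤ c → L i m = 0) :=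
  cholesky_row_zero_iff_general p S L D hS hL_lower hL_diag hD_diag hdecomp i c
end

section
/- Let Ω be a real positive definite p×p matrix with modified Cholesky decomposition Ω = Tᵀ D⁻¹ T, where T is lower triangular with unit diagonal and D is diagonal with positive diagonal entries. Then for any column index j and any r > j, the entries ω_{r,j} = ω_{r+1,j} = ⋯ = ω_{p,j} = 0 if and only if t_{r,j} = t_{r+1,j} = ⋯ = t_{p,j} = 0; that is, (∀ m with r ≤ m ≤ p, ω_{m,j} = 0) ↔ (∀ m with r ≤ m ≤ p, t_{m,j} = 0). -/
/-!
Since `Ω = Tᵀ (D⁻¹ T)`, column `j` of `Ω` is the upper triangular matrix `Tᵀ` applied to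
column `j` of `D⁻¹ T`, whose entries are `t_{kj} / d_k`. An upper triangular matrix with
nonzero diagonal maps a vector vanishing from index `r` on to such a vector, and back
substitution from the last row shows the converse.
-/

open Matrix

namespace Matrix

variable {ι : Type*} [Fintype ι]

theorem IsDiag.inv_eq_diagonal {K : Type*} [DecidableEq ι] [Field K] {A : Matrix ι ι K}
    (hA : A.IsDiag) (hd : ∀ i, A i i ≠ 0) : A⁻¹ = diagonal fun i => (A i i)⁻¹ := by
  refine inv_eq_left_inv ?_
  nth_rewrite 2 [← hA.diagonal_diag]
  simp [diagonal_mul_diagonal, inv_mul_cancel₀ (hd _)]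

section UpperTriangular

variable {R : Type*} [LinearOrder ι] [NonUnitalNonAssocSemiring R] {U : Matrix ι ι R}

theorem BlockTriangular.mulVec_apply_eq_diag_mul (hU : U.BlockTriangular id) {v : ι → R}
    {m : ι} (hv : ∀ k, m < k → v k = 0) : (U *ᵥ v) m = U m m * v m := by
  simp only [mulVec, dotProduct]
  refine Finset.sum_eq_single m (fun k _ hkm => ?_) (by simp)
  rcases hkm.lt_or_gt with hlt | hgt
  · rw [hU hlt, zero_mul]
  · rw [hv k hgt, mul_zero]

theorem BlockTriangular.mulVec_eq_zero_on_Ici_iff [NoZeroDivisors R]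
    (hU : U.BlockTriangular id) (hdiag : ∀ i, U i i ≠ 0) (v : ι → R) (r : ι) :
    (∀ m, r ≤ m → (U *ᵥ v) m = 0) ↔ ∀ m, r ≤ m → v m = 0 := by
  constructor
  · intro hUv m
    induction m using WellFoundedGT.induction with
    | _ m ih =>
      intro hrm
      have hm := hUv m hrm
      rw [hU.mulVec_apply_eq_diag_mul fun k hmk => ih k hmk (hrm.trans hmk.le)] at hm
      exact (mul_eq_zero.mp hm).resolve_left (hdiag m)
  · intro hv m hrm
    rw [hU.mulVec_apply_eq_diag_mul fun k hmk => hv k (hrm.trans hmk.le), hv m hrm, mul_zero]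

end UpperTriangular

end Matrix

theorem inverse_cholesky_column_zero_iff_general
    (p : ℕ) (Om T D : Matrix (Fin p) (Fin p) ℝ)
    (hT_lower : ∀ i j : Fin p, i < j → T i j = 0)
    (hT_diag : ∀ i : Fin p, T i i = 1)
    (hD_diag : ∀ i j : Fin p, i ≠ j → D i j = 0)
    (hD_pos : ∀ i : Fin p, 0 < D i i)
    (hdecomp : Om = Tᵀ * D⁻¹ * T)
    (j r : Fin p) :
    (∀ m : Fin p, r ≤ m → Om m j = 0) ↔ (∀ m : Fin p, r ≤ m → T m j = 0) := by
  have hDT : ∀ k, (D⁻¹ * T) k j = (D k k)⁻¹ * T k j := fun k => by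
    rw [IsDiag.inv_eq_diagonal hD_diag fun i => (hD_pos i).ne', diagonal_mul]
  have hcol : ∀ m, Om m j = (Tᵀ *ᵥ fun k => (D⁻¹ * T) k j) m := fun m => by
    rw [hdecomp, Matrix.mul_assoc]
    rfl
  have hTt : Tᵀ.BlockTriangular id := fun m k hkm => hT_lower k m hkm
  simp only [hcol, hTt.mulVec_eq_zero_on_Ici_iff (fun i => by simp [hT_diag]), hDT,
    mul_eq_zero, inv_eq_zero, (hD_pos _).ne', false_or]

/-- For a positive definite `Ω = Tᵀ D⁻¹ T` (modified Cholesky decomposition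
of the inverse covariance), a trailing segment of zeros in a column of `Ω` below the
diagonal corresponds exactly to a trailing segment of zeros in that column of `T`. -/
theorem inverse_cholesky_column_zero_iff
    (p : ℕ) (Om T D : Matrix (Fin p) (Fin p) ℝ)
    (hOm : Om.PosDef)
    (hT_lower : ∀ i j : Fin p, i < j → T i j = 0)
    (hT_diag : ∀ i : Fin p, T i i = 1)
    (hD_diag : ∀ i j : Fin p, i ≠ j → D i j = 0)
    (hD_pos : ∀ i : Fin p, 0 < D i i)
    (hdecomp : Om = Tᵀ * D⁻¹ * T)
    (j r : Fin p) (hjr : j < r) :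
    (∀ m : Fin p, r ≤ m → Om m j = 0) ↔ (∀ m : Fin p, r ≤ m → T m j = 0) :=
  inverse_cholesky_column_zero_iff_general p Om T D hT_lower hT_diag hD_diag hD_pos hdecomp j r
end

section
/- Let Ω be a real positive definite p×p matrix with modified Cholesky decomposition Ω = Tᵀ D⁻¹ T, where T is lower triangular with unit diagonal and D is diagonal with positive diagonal entries, and let k ≥ 0 be an integer. Then Ω is k-banded (ω_{ij} = 0 whenever |i−j| > k) if and only if T is k-banded (t_{ij} = 0 whenever |i−j| > k). -/
/-!
Entrywise, `(Tᵀ * D⁻¹ * T) i j = ∑ b, T b i * (D b b)⁻¹ * T b j`, and `T b i ≠ 0` forces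
`i ≤ b ≤ i + k` when `T` is lower triangular and `k`-banded; a nonzero summand therefore
needs `|i - j| ≤ k`. Conversely, for `i > j + k`, once the rows of `T` below row `i` are known
to be banded, the only surviving summand is `b = i`, so `Ω i j = (D i i)⁻¹ * T i j` and
`T i j = 0`: bandedness of `Ω` passes to `T` by downward induction on the row.
-/

open Matrix

namespace Matrix

def IsBanded {R : Type*} [Zero R] {p : ℕ} (k : ℕ) (M : Matrix (Fin p) (Fin p) R) : Prop :=
  ∀ i j : Fin p, (k : ℤ) < |((i : ℕ) : ℤ) - ((j : ℕ) : ℤ)| → M i j = 0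

theorem inv_eq_diagonal_inv_of_isDiag {n K : Type*} [Fintype n] [DecidableEq n] [Field K]
    {D : Matrix n n K} (hD : D.IsDiag) (hD₀ : ∀ i, D i i ≠ 0) :
    D⁻¹ = diagonal fun i => (D i i)⁻¹ := by
  refine inv_eq_left_inv ?_
  nth_rewrite 2 [← hD.diagonal_diag]
  rw [diagonal_mul_diagonal, ← diagonal_one]
  exact congrArg diagonal (funext fun i => inv_mul_cancel₀ (hD₀ i))

theorem transpose_mul_diagonal_mul_apply {n R : Type*} [Fintype n] [DecidableEq n] [Semiring R]
    (T : Matrix n n R) (d : n → R) (i j : n) :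
    (Tᵀ * diagonal d * T) i j = ∑ b, T b i * d b * T b j := by
  simp only [mul_apply (M := Tᵀ * diagonal d), mul_diagonal, transpose_apply]

section LowerTriangular

variable {R : Type*} [Semiring R] {p : ℕ} {T : Matrix (Fin p) (Fin p) R}

theorem transpose_mul_diagonal_mul_apply_of_lower (hT_lower : ∀ i j : Fin p, i < j → T i j = 0)
    (hT_diag : ∀ i : Fin p, T i i = 1) (d : Fin p → R) {i j : Fin p}
    (hbelow : ∀ b, i < b → T b j = 0) :
    (Tᵀ * diagonal d * T) i j = d i * T i j := by
  rw [transpose_mul_diagonal_mul_apply, Finset.sum_eq_single i]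
  · rw [hT_diag, one_mul]
  · intro b _ hbi
    rcases hbi.lt_or_gt with hb | hb
    · rw [hT_lower b i hb, zero_mul, zero_mul]
    · rw [hbelow b hb, mul_zero]
  · exact fun h => absurd (Finset.mem_univ i) h

theorem isBanded_iff_of_lower (k : ℕ) (hT_lower : ∀ i j : Fin p, i < j → T i j = 0) :
    T.IsBanded k ↔ ∀ i j : Fin p, (j : ℕ) + k < i → T i j = 0 := by
  refine ⟨fun h i j hij => h i j (lt_abs.2 (Or.inl (by omega))), fun h i j hij => ?_⟩
  rcases lt_abs.1 hij with hij | hij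
  · exact h i j (by omega)
  · exact hT_lower i j (Fin.lt_def.2 (by omega))

theorem IsBanded.transpose_mul_diagonal_mul {k : ℕ}
    (hT_lower : ∀ i j : Fin p, i < j → T i j = 0) (hT : T.IsBanded k) (d : Fin p → R) : (Tᵀ * diagonal d * T).IsBanded k := by
  rw [isBanded_iff_of_lower k hT_lower] at hT
  intro i j hij
  rw [transpose_mul_diagonal_mul_apply]
  refine Finset.sum_eq_zero fun b _ => ?_
  by_cases hbi : T b i = 0
  · rw [hbi, zero_mul, zero_mul]
  have hib : (i : ℕ) ≤ b := not_lt.1 fun h => hbi (hT_lower b i h)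
  have hbi' : (b : ℕ) ≤ i + k := not_lt.1 fun h => hbi (hT b i h)
  have hbj : T b j = 0 := by
    rcases lt_abs.1 hij with hij | hij
    · exact hT b j (by omega)
    · exact hT_lower b j (Fin.lt_def.2 (by omega))
  rw [hbj, mul_zero]

theorem isBanded_of_transpose_mul_diagonal_mul [NoZeroDivisors R] {k : ℕ}
    (hT_lower : ∀ i j : Fin p, i < j → T i j = 0) (hT_diag : ∀ i : Fin p, T i i = 1)
    {d : Fin p → R} (hd : ∀ i, d i ≠ 0) (hΩ : (Tᵀ * diagonal d * T).IsBanded k) :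
    T.IsBanded k := by
  rw [isBanded_iff_of_lower k hT_lower]
  intro i
  induction i using WellFoundedGT.induction with
  | _ i ih =>
    intro j hij
    have hΩij := hΩ i j (lt_abs.2 (Or.inl (by omega)))
    rw [transpose_mul_diagonal_mul_apply_of_lower hT_lower hT_diag d
      fun b hb => ih b hb j (by omega)] at hΩij
    exact (mul_eq_zero.1 hΩij).resolve_left (hd i)

theorem transpose_mul_diagonal_mul_isBanded_iff [NoZeroDivisors R] (k : ℕ)
    (hT_lower : ∀ i j : Fin p, i < j → T i j = 0) (hT_diag : ∀ i : Fin p, T i i = 1)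
    {d : Fin p → R} (hd : ∀ i, d i ≠ 0) :
    (Tᵀ * diagonal d * T).IsBanded k ↔ T.IsBanded k :=
  ⟨isBanded_of_transpose_mul_diagonal_mul hT_lower hT_diag hd,
    fun hT => hT.transpose_mul_diagonal_mul hT_lower d⟩

end LowerTriangular

end Matrix

theorem inverse_cholesky_banded_iff_general
    (p : ℕ) (Om T D : Matrix (Fin p) (Fin p) ℝ) (k : ℕ)
    (hT_lower : ∀ i j : Fin p, i < j → T i j = 0)
    (hT_diag : ∀ i : Fin p, T i i = 1)
    (hD_diag : ∀ i j : Fin p, i ≠ j → D i j = 0)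
    (hD_pos : ∀ i : Fin p, 0 < D i i)
    (hdecomp : Om = Tᵀ * D⁻¹ * T) :
    (∀ i j : Fin p, (k : ℤ) < |((i : ℕ) : ℤ) - ((j : ℕ) : ℤ)| → Om i j = 0) ↔
      (∀ i j : Fin p, (k : ℤ) < |((i : ℕ) : ℤ) - ((j : ℕ) : ℤ)| → T i j = 0) := by
  rw [hdecomp, inv_eq_diagonal_inv_of_isDiag hD_diag fun i => (hD_pos i).ne']
  exact transpose_mul_diagonal_mul_isBanded_iff k hT_lower hT_diag
    fun i => inv_ne_zero (hD_pos i).ne'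

/-- For a positive definite `Ω = Tᵀ D⁻¹ T` (modified Cholesky decomposition
of the inverse covariance) and any integer `k ≥ 0`, `Ω` is `k`-banded iff its Cholesky
factor `T` is `k`-banded. -/
theorem inverse_cholesky_banded_iff
    (p : ℕ) (Om T D : Matrix (Fin p) (Fin p) ℝ) (k : ℕ)
    (hOm : Om.PosDef)
    (hT_lower : ∀ i j : Fin p, i < j → T i j = 0)
    (hT_diag : ∀ i : Fin p, T i i = 1)
    (hD_diag : ∀ i j : Fin p, i ≠ j → D i j = 0)
    (hD_pos : ∀ i : Fin p, 0 < D i i)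
    (hdecomp : Om = Tᵀ * D⁻¹ * T) :
    (∀ i j : Fin p, (k : ℤ) < |((i : ℕ) : ℤ) - ((j : ℕ) : ℤ)| → Om i j = 0) ↔
      (∀ i j : Fin p, (k : ℤ) < |((i : ℕ) : ℤ) - ((j : ℕ) : ℤ)| → T i j = 0) :=
  inverse_cholesky_banded_iff_general p Om T D k hT_lower hT_diag hD_diag hD_pos hdecomp
end

section
/- Let T be a real p×p lower triangular matrix with unit diagonal and let D be a real p×p diagonal matrix with strictly positive diagonal entries. Let A be a real p×p strictly lower triangular matrix (zero diagonal) and let B be a real p×p diagonal matrix. If Tᵀ D⁻¹ A + Aᵀ D⁻¹ T − Tᵀ D⁻² B T = 0, then A = 0 and B = 0. -/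
/-!
Since `L := A T⁻¹` is strictly lower triangular and `A = L T`, the equation reads
`Tᵀ (D⁻¹ L + Lᵀ D⁻¹ − D⁻² B) T = 0`; as `T` is invertible, `D⁻¹ L + Lᵀ D⁻¹ = D⁻² B`.
The strictly lower part of the left side is `D⁻¹ L` while the right side is diagonal,
so `L = 0`, hence `A = 0`, and then `D⁻² B = 0` gives `B = 0`.
-/

open Matrix

namespace Matrix

variable {n R : Type*} [Fintype n]

def IsStrictLowerTriangular [LE n] [Zero R] (M : Matrix n n R) : Prop :=
  ∀ ⦃i j⦄, i ≤ j → M i j = 0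

theorem IsStrictLowerTriangular.mul_isLowerTriangular [LinearOrder n]
    [NonUnitalNonAssocSemiring R] {L M : Matrix n n R} (hL : L.IsStrictLowerTriangular)
    (hM : M.IsLowerTriangular) : (L * M).IsStrictLowerTriangular := fun i j hij => by
  rw [mul_apply]
  refine Finset.sum_eq_zero fun k _ => ?_
  rcases lt_or_ge k i with hki | hik
  · rw [hM (hki.trans_le hij), mul_zero]
  · rw [hL hik, zero_mul]

theorem IsStrictLowerTriangular.eq_zero_of_diagonal_mul_add_eq_diagonal [LinearOrder n]
    [DecidableEq n] [NonAssocSemiring R] [NoZeroDivisors R] {L : Matrix n n R} {e c : n → R}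
    (hL : L.IsStrictLowerTriangular) (he : ∀ i, e i ≠ 0)
    (h : diagonal e * L + Lᵀ * diagonal e = diagonal c) : L = 0 ∧ c = 0 := by
  have hentry (i j : n) : e i * L i j + L j i * e j = diagonal c i j := by
    rw [← h, add_apply, diagonal_mul, mul_diagonal, transpose_apply]
  have hL0 : L = 0 := by
    ext i j
    rcases le_or_gt i j with hij | hji
    · exact hL hij
    · have := hentry i j
      rw [hL hji.le, zero_mul, add_zero, diagonal_apply_ne _ hji.ne'] at this
      exact (mul_eq_zero.mp this).resolve_left (he i)
  refine ⟨hL0, funext fun i => ?_⟩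
  simpa [hL0] using (hentry i i).symm

theorem isUnit_of_isLowerTriangular_of_diag_eq_one [LinearOrder n] [CommRing R]
    {T : Matrix n n R} (hT : T.IsLowerTriangular) (h1 : ∀ i, T i i = 1) : IsUnit T := by
  rw [isUnit_iff_isUnit_det, det_of_isLowerTriangular T hT]
  simp [h1]

theorem inv_diagonal_of_ne_zero [DecidableEq n] {K : Type*} [Field K] {d : n → K}
    (hd : ∀ i, d i ≠ 0) : (diagonal d)⁻¹ = diagonal d⁻¹ := by
  refine inv_eq_right_inv ?_
  rw [diagonal_mul_diagonal, ← diagonal_one]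
  exact congrArg diagonal (funext fun i => mul_inv_cancel₀ (hd i))

theorem eq_zero_of_transpose_mul_mul_eq_zero [DecidableEq n] [CommRing R] {T X : Matrix n n R}
    (hT : IsUnit T) (h : Tᵀ * X * T = 0) : X = 0 :=
  ((isUnit_transpose T).mpr hT).mul_right_eq_zero.mp (hT.mul_left_eq_zero.mp h)

end Matrix

/-- The differential of `(T, D) ↦ Tᵀ D⁻¹ T` is injective at any `T` lower
triangular with unit diagonal and `D` diagonal with positive diagonal entries: if `A` is
strictly lower triangular, `B` is diagonal, and
`Tᵀ D⁻¹ A + Aᵀ D⁻¹ T − Tᵀ D⁻² B T = 0`, then `A = 0` and `B = 0`. -/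
theorem cholesky_differential_injective
    (p : ℕ) (T D A B : Matrix (Fin p) (Fin p) ℝ)
    (hT_lower : ∀ i j : Fin p, i < j → T i j = 0)
    (hT_diag : ∀ i : Fin p, T i i = 1)
    (hD_diag : ∀ i j : Fin p, i ≠ j → D i j = 0)
    (hD_pos : ∀ i : Fin p, 0 < D i i)
    (hA_strict : ∀ i j : Fin p, i ≤ j → A i j = 0)
    (hB_diag : ∀ i j : Fin p, i ≠ j → B i j = 0)
    (h : Tᵀ * D⁻¹ * A + Aᵀ * D⁻¹ * T - Tᵀ * (D⁻¹ * D⁻¹) * B * T = 0) :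
    A = 0 ∧ B = 0 := by
  obtain ⟨d, rfl⟩ : ∃ d, D = diagonal d := ⟨D.diag, (IsDiag.diagonal_diag hD_diag).symm⟩
  obtain ⟨b, rfl⟩ : ∃ b, B = diagonal b := ⟨B.diag, (IsDiag.diagonal_diag hB_diag).symm⟩
  have hd (i : Fin p) : d i ≠ 0 := by simpa using (hD_pos i).ne'
  have hT : T.IsLowerTriangular := hT_lower
  have hTunit := isUnit_of_isLowerTriangular_of_diag_eq_one hT hT_diag
  have : Invertible T := hTunit.invertible
  obtain ⟨L, hL, rfl⟩ : ∃ L : Matrix _ _ ℝ, L.IsStrictLowerTriangular ∧ A = L * T :=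
    ⟨A * T⁻¹, IsStrictLowerTriangular.mul_isLowerTriangular hA_strict
      (blockTriangular_inv_of_blockTriangular hT), by simp⟩
  rw [inv_diagonal_of_ne_zero hd] at h
  have hconj :
      Tᵀ * (diagonal d⁻¹ * L + Lᵀ * diagonal d⁻¹ - diagonal d⁻¹ * diagonal d⁻¹ * diagonal b) * T
        = 0 := by
    rw [← h, transpose_mul]
    noncomm_ring
  have hsymm := sub_eq_zero.mp (eq_zero_of_transpose_mul_mul_eq_zero hTunit hconj)
  rw [diagonal_mul_diagonal, diagonal_mul_diagonal] at hsymm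
  obtain ⟨rfl, hb⟩ :=
    hL.eq_zero_of_diagonal_mul_add_eq_diagonal (fun i => inv_ne_zero (hd i)) hsymm
  refine ⟨Matrix.zero_mul T, diagonal_eq_zero.mpr (funext fun i => ?_)⟩
  simpa [hd i] using congrFun hb i
end

section
/- Let S be a real positive definite p×p matrix. Then the function f(Ω) = trace(S Ω) − log det Ω over real positive definite p×p matrices Ω attains its unique minimum at Ω = S⁻¹; that is, for every positive definite Ω with Ω ≠ S⁻¹, one has trace(S Ω) − log det Ω > trace(S S⁻¹) − log det(S⁻¹) = p + log det S. -/
/-!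
Write `S = Xᴴ X` with `X` invertible and put `B = X Ω Xᴴ`, which is positive definite with
`tr B = tr (S Ω)` and `det B = det S · det Ω`. With `λᵢ` the eigenvalues of `B`,
`tr B - log det B = ∑ (λᵢ - log λᵢ)`, and `λ - log λ ≥ 1` with equality only at `λ = 1`.
Hence the objective exceeds `p + log det S` unless all `λᵢ = 1`, i.e. `B = 1`, i.e. `Ω = S⁻¹`.
-/

open Matrix

namespace Matrix

variable {n : Type*} [Fintype n] [DecidableEq n]

theorem IsHermitian.eq_one_of_eigenvalues_eq_one {𝕜 : Type*} [RCLike 𝕜] {A : Matrix n n 𝕜}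
    (hA : A.IsHermitian) (h : ∀ i, hA.eigenvalues i = 1) : A = 1 :=
  CFC.eq_one_of_spectrum_subset_one (R := ℝ) A
    (by rw [hA.spectrum_real_eq_range_eigenvalues]; rintro _ ⟨i, rfl⟩; exact h i) hA

theorem PosDef.trace_sub_log_det_eq_sum {B : Matrix n n ℝ} (hB : B.PosDef) :
    B.trace - Real.log B.det =
      ∑ i, (hB.1.eigenvalues i - Real.log (hB.1.eigenvalues i)) := by
  rw [hB.1.trace_eq_sum_eigenvalues, hB.1.det_eq_prod_eigenvalues, Finset.sum_sub_distrib]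
  simp only [RCLike.ofReal_real_eq_id, id]
  rw [Real.log_prod fun i _ ↦ (hB.eigenvalues_pos i).ne']

theorem PosDef.card_lt_trace_sub_log_det {B : Matrix n n ℝ} (hB : B.PosDef) (hB1 : B ≠ 1) :
    (Fintype.card n : ℝ) < B.trace - Real.log B.det := by
  obtain ⟨j, hj⟩ : ∃ j, hB.1.eigenvalues j ≠ 1 := by
    by_contra! h
    exact hB1 (hB.1.eq_one_of_eigenvalues_eq_one h)
  rw [hB.trace_sub_log_det_eq_sum, ← mul_one (Fintype.card n : ℝ), ← nsmul_eq_mul,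
    ← Finset.card_univ, ← Finset.sum_const]
  refine Finset.sum_lt_sum (fun i _ ↦ ?_) ⟨j, Finset.mem_univ j, ?_⟩
  · linarith [Real.log_le_sub_one_of_pos (hB.eigenvalues_pos i)]
  · linarith [Real.log_lt_sub_one_of_pos (hB.eigenvalues_pos j) hj]

open scoped MatrixOrder in
theorem PosDef.exists_isUnit_conjTranspose_mul_self_eq {S : Matrix n n ℝ} (hS : S.PosDef) :
    ∃ X : Matrix n n ℝ, IsUnit X ∧ Xᴴ * X = S := by
  set X := CFC.sqrt S
  have hXX : X * X = S := CFC.sqrt_mul_sqrt_self S hS.posSemidef.nonneg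
  refine ⟨X, ?_, by rw [(CFC.sqrt_nonneg S).posSemidef.1.eq, hXX]⟩
  refine (isUnit_iff_isUnit_det X).mpr (isUnit_of_mul_isUnit_left (y := X.det) ?_)
  rw [← det_mul, hXX]
  exact (isUnit_iff_isUnit_det S).mp hS.isUnit

theorem PosDef.card_add_log_det_lt_trace_mul_sub_log_det {S Ω : Matrix n n ℝ} (hS : S.PosDef)
    (hΩ : Ω.PosDef) (hne : Ω ≠ S⁻¹) :
    (Fintype.card n : ℝ) + Real.log S.det < (S * Ω).trace - Real.log Ω.det := by
  obtain ⟨X, hX, rfl⟩ := hS.exists_isUnit_conjTranspose_mul_self_eq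
  set B := X * Ω * Xᴴ
  have hB : B.PosDef := hΩ.mul_mul_conjTranspose_same (vecMul_injective_iff_isUnit.mpr hX)
  have hB1 : B ≠ 1 := by
    intro h
    rw [mul_eq_one_comm, ← mul_assoc] at h
    exact hne (inv_eq_right_inv h).symm
  have htr : (Xᴴ * X * Ω).trace = B.trace := by
    rw [mul_assoc, trace_mul_comm]
  have hdet : B.det = (Xᴴ * X).det * Ω.det := by
    simp only [B, det_mul]
    ring
  have := hB.card_lt_trace_sub_log_det hB1
  rw [hdet, Real.log_mul hS.det_pos.ne' hΩ.det_pos.ne'] at this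
  linarith

end Matrix

/-- For a positive definite `S`, the function
`f(Ω) = tr(SΩ) − log det Ω` on positive definite matrices attains its unique minimum at
`Ω = S⁻¹`, with minimum value `tr(S S⁻¹) − log det (S⁻¹) = p + log det S`. -/
theorem trace_logdet_unique_minimizer
    (p : ℕ) (S : Matrix (Fin p) (Fin p) ℝ) (hS : S.PosDef) :
    ((S * S⁻¹).trace - Real.log (S⁻¹).det = (p : ℝ) + Real.log S.det) ∧
      ∀ Om : Matrix (Fin p) (Fin p) ℝ, Om.PosDef → Om ≠ S⁻¹ →
        (p : ℝ) + Real.log S.det < (S * Om).trace - Real.log Om.det := by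
  have hSdet : IsUnit S.det := (isUnit_iff_isUnit_det S).mp hS.isUnit
  refine ⟨?_, fun Om hOm hne ↦ ?_⟩
  · rw [mul_nonsing_inv S hSdet, trace_one, det_nonsing_inv, Ring.inverse_eq_inv', Real.log_inv,
      Fintype.card_fin, sub_neg_eq_add]
  · simpa only [Fintype.card_fin] using hS.card_add_log_det_lt_trace_mul_sub_log_det hOm hne
end

section
/- Banding the modified Cholesky factor of the inverse is the constrained maximum likelihood estimator: Let X be a real n×p matrix with columns x₁, …, x_p ∈ ℝⁿ, let Σ̂ = (1/n)XᵀX, and fix an integer k ≥ 1. For each j = 2, …, p, suppose the matrix with columns x_{max(1,j−k)}, …, x_{j−1} has full column rank, let (−t̂_{j,max(1,j−k)}, …, −t̂_{j,j−1}) be its least squares coefficients for response x_j (minimizing ‖x_j − Σ_{v=max(1,j−k)}^{j−1} β_v x_v‖² over β), and suppose the residual r_j = x_j + Σ_{v=max(1,j−k)}^{j−1} t̂_{jv} x_v is nonzero; suppose also x₁ ≠ 0. Let T̂ be the lower triangular matrix with unit diagonal, entries t̂_{jv} for max(1,j−k) ≤ v < j, and zeros elsewhere; let D̂ be diagonal with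 d̂_{11} = ‖x₁‖²/n and d̂_{jj} = ‖r_j‖²/n. Then Ω̂ = T̂ᵀ D̂⁻¹ T̂ minimizes f(Ω) = trace(Σ̂ Ω) − log det Ω over all real positive definite p×p matrices Ω satisfying ω_{ij} = 0 for all |i−j| > k. -/
open Matrix

/-- The band of predecessors used in the `k`-banded regression for variable `j`
(0-based): indices `v` with `max(0, j−k) ≤ v < j`. -/
def cholBand (p k : ℕ) (j : Fin p) : Finset (Fin p) :=
  Finset.univ.filter fun v : Fin p => v < j ∧ (j : ℕ) ≤ (v : ℕ) + k

/-- The residual of the banded regression of column `j` of `X` on its band of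
predecessor columns, with (negated) coefficients taken from row `j` of `T`. -/
def bandResid {n p : ℕ} (k : ℕ) (X : Matrix (Fin n) (Fin p) ℝ)
    (T : Matrix (Fin p) (Fin p) ℝ) (j : Fin p) : Fin n → ℝ :=
  fun i => X i j + ∑ v ∈ cholBand p k j, T j v * X i v

/-!
Let `Ω̂ = T̂ᵀ D̂⁻¹ T̂` and `E = Ω̂⁻¹ - Σ̂`. Row `j` of `T̂ Ω̂⁻¹ = D̂ T̂⁻ᵀ` vanishes left of the
diagonal and equals `d̂ⱼ` on it, while row `j` of `T̂ Σ̂` is `rⱼᵀ X / n`, which vanishes on the band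
columns by the normal equations of the regression and equals `‖rⱼ‖² / n = d̂ⱼ` on the diagonal.
So `T̂ E` vanishes on the lower band; as `T̂` is unit lower triangular of bandwidth `k` and `E` is
symmetric, induction over the rows shows that `E` itself vanishes on the band. Hence
`tr (Σ̂ Ω) = tr (Ω̂⁻¹ Ω)` for every `k`-banded `Ω`, and
`f Ω - f Ω̂ = tr (Ω̂⁻¹ Ω) - p - log det (Ω̂⁻¹ Ω) ≥ 0`, since `log λ ≤ λ - 1` for every eigenvalue
of the positive definite matrix `Ω̂^{-1/2} Ω Ω̂^{-1/2}`.
-/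

namespace Matrix

section PosDef

variable {m : Type*} [Fintype m] [DecidableEq m]

theorem PosDef.transpose_mul_mul_of_isUnit_det {A B : Matrix m m ℝ} (hA : A.PosDef)
    (hB : IsUnit B.det) : (Bᵀ * A * B).PosDef := by
  simpa using hA.conjTranspose_mul_mul_same
    (mulVec_injective_iff_isUnit.mpr ((isUnit_iff_isUnit_det B).mpr hB))

theorem PosDef.log_det_le_trace_sub_card {A : Matrix m m ℝ} (hA : A.PosDef) :
    Real.log A.det ≤ A.trace - Fintype.card m := by
  have hev := hA.eigenvalues_pos
  rw [hA.isHermitian.det_eq_prod_eigenvalues, hA.isHermitian.trace_eq_sum_eigenvalues]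
  simp only [RCLike.ofReal_real_eq_id, id_eq]
  rw [Real.log_prod fun i _ => (hev i).ne']
  calc ∑ i, Real.log (hA.isHermitian.eigenvalues i)
      ≤ ∑ i, (hA.isHermitian.eigenvalues i - 1) :=
        Finset.sum_le_sum fun i _ => Real.log_le_sub_one_of_pos (hev i)
    _ = _ := by simp [Finset.sum_sub_distrib]

open scoped MatrixOrder in
theorem PosDef.log_det_sub_log_det_le {A B : Matrix m m ℝ} (hA : A.PosDef) (hB : B.PosDef) :
    Real.log B.det - Real.log A.det ≤ (A⁻¹ * B).trace - Fintype.card m := by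
  set Q := CFC.sqrt A⁻¹
  have hQQ : Q * Q = A⁻¹ := CFC.sqrt_mul_sqrt_self A⁻¹ hA.inv.posSemidef.nonneg
  have hQT : Qᵀ = Q := by
    simpa using (nonneg_iff_posSemidef.mp (CFC.sqrt_nonneg A⁻¹)).isHermitian.eq
  have hQdet : Q.det * Q.det = A.det⁻¹ := by
    rw [← det_mul, hQQ, det_nonsing_inv, Ring.inverse_eq_inv]
  have hQunit : IsUnit Q.det :=
    isUnit_iff_ne_zero.mpr (left_ne_zero_of_mul (hQdet ▸ inv_ne_zero hA.det_pos.ne'))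
  have hC := hB.transpose_mul_mul_of_isUnit_det hQunit
  rw [hQT] at hC
  have key := hC.log_det_le_trace_sub_card
  rwa [trace_mul_comm, ← Matrix.mul_assoc, hQQ, det_mul, det_mul, mul_right_comm, hQdet,
    Real.log_mul (inv_ne_zero hA.det_pos.ne') hB.det_pos.ne', Real.log_inv, neg_add_eq_sub] at key

theorem PosDef.trace_mul_sub_log_det_le {S A B : Matrix m m ℝ} (hA : A.PosDef) (hB : B.PosDef)
    (hSA : ((A⁻¹ - S) * A).trace = 0) (hSB : ((A⁻¹ - S) * B).trace = 0) :
    (S * A).trace - Real.log A.det ≤ (S * B).trace - Real.log B.det := by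
  have key := hA.log_det_sub_log_det_le hB
  rw [sub_mul, trace_sub, sub_eq_zero] at hSA hSB
  rw [nonsing_inv_mul A (isUnit_iff_ne_zero.mpr hA.det_pos.ne'), trace_one] at hSA
  linarith

end PosDef

theorem inv_apply_self_of_isLowerTriangular {K m : Type*} [CommRing K] [Fintype m]
    [LinearOrder m] {T : Matrix m m K} (hT : T.IsLowerTriangular) (hT_diag : ∀ j, T j j = 1)
    (j : m) : T⁻¹ j j = 1 := by
  classical
  have hdet : IsUnit T.det := by
    rw [det_of_isLowerTriangular T hT]; simp [hT_diag]
  have := T.invertibleOfIsUnitDet hdet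
  have hTinv : T⁻¹.IsLowerTriangular := blockTriangular_inv_of_blockTriangular hT
  have h := congrFun (congrFun (nonsing_inv_mul T hdet) j) j
  rwa [mul_apply, Finset.sum_eq_single j, hT_diag, mul_one, one_apply_eq] at h
  · intro v _ hv
    rcases hv.lt_or_gt with hlt | hgt
    · rw [hT hlt, mul_zero]
    · rw [hTinv hgt, zero_mul]
  · simp

theorem mul_inv_transpose_mul_inv_mul {K m : Type*} [CommRing K] [Fintype m]
    [DecidableEq m] {T D : Matrix m m K} (hT : IsUnit T.det) (hD : IsUnit D.det) :
    T * (Tᵀ * D⁻¹ * T)⁻¹ = D * T⁻¹ᵀ := by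
  rw [mul_inv_rev, mul_inv_rev, nonsing_inv_nonsing_inv _ hD, ← Matrix.mul_assoc,
    mul_nonsing_inv _ hT, Matrix.one_mul, transpose_nonsing_inv]

theorem trace_mul_eq_zero_of_isBanded {R : Type*} [NonUnitalNonAssocSemiring R] {p k : ℕ}
    {E M : Matrix (Fin p) (Fin p) R}
    (hE : ∀ i j : Fin p, (i : ℕ) ≤ j + k → (j : ℕ) ≤ i + k → E i j = 0) (hM : M.IsBanded k) :
    (E * M).trace = 0 := by
  refine Finset.sum_eq_zero fun i _ => ?_
  rw [diag_apply, mul_apply]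
  refine Finset.sum_eq_zero fun j _ => ?_
  by_cases h : (i : ℕ) ≤ j + k ∧ (j : ℕ) ≤ i + k
  · rw [hE i j h.1 h.2, zero_mul]
  · rw [hM j i (by rw [lt_abs]; omega), mul_zero]

end Matrix

theorem mem_cholBand {p k : ℕ} {j v : Fin p} :
    v ∈ cholBand p k j ↔ v < j ∧ (j : ℕ) ≤ v + k := by
  simp [cholBand]

structure Matrix.IsUnitLowerBanded {R : Type*} [Zero R] [One R] {p : ℕ} (k : ℕ)
    (T : Matrix (Fin p) (Fin p) R) : Prop where
  apply_self : ∀ j, T j j = 1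
  apply_eq_zero : ∀ j v, v ≠ j → v ∉ cholBand p k j → T j v = 0

namespace Matrix.IsUnitLowerBanded

variable {R : Type*} [Semiring R] {p k : ℕ} {T : Matrix (Fin p) (Fin p) R}

theorem apply_eq_zero_outside_band (hT : T.IsUnitLowerBanded k) {j v : Fin p}
    (h : ¬(v ≤ j ∧ (j : ℕ) ≤ v + k)) : T j v = 0 := by
  refine hT.apply_eq_zero j v (by rintro rfl; omega) fun hv => h ?_
  rw [mem_cholBand] at hv
  exact ⟨hv.1.le, hv.2⟩

theorem isLowerTriangular (hT : T.IsUnitLowerBanded k) : T.IsLowerTriangular :=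
  fun j v (h : j < v) => hT.apply_eq_zero_outside_band fun hv => absurd hv.1 (not_le.mpr h)

theorem det_eq_one {R : Type*} [CommRing R] {T : Matrix (Fin p) (Fin p) R}
    (hT : T.IsUnitLowerBanded k) : T.det = 1 := by
  rw [det_of_isLowerTriangular T hT.isLowerTriangular]
  simp [hT.apply_self]

theorem mul_apply {ι : Type*} (hT : T.IsUnitLowerBanded k) (M : Matrix (Fin p) ι R)
    (j : Fin p) (i : ι) : (T * M) j i = M j i + ∑ v ∈ cholBand p k j, T j v * M v i := by
  have hj : j ∉ cholBand p k j := fun h => (mem_cholBand.mp h).1.false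
  rw [Matrix.mul_apply, ← Finset.sum_subset (Finset.subset_univ (insert j (cholBand p k j))),
    Finset.sum_insert hj, hT.apply_self, one_mul]
  intro v _ hv
  rw [Finset.mem_insert, not_or] at hv
  rw [hT.apply_eq_zero j v hv.1 hv.2, zero_mul]

theorem isBanded_transpose_mul_diagonal_mul (hT : T.IsUnitLowerBanded k) (e : Fin p → R) :
    (Tᵀ * diagonal e * T).IsBanded k := by
  intro i j hij
  rw [lt_abs] at hij
  rw [Matrix.mul_apply]
  refine Finset.sum_eq_zero fun l _ => ?_
  rw [mul_diagonal, transpose_apply]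
  by_cases hi : i ≤ l ∧ (l : ℕ) ≤ i + k
  · rw [hT.apply_eq_zero_outside_band (j := l) (v := j) (by omega), mul_zero]
  · rw [hT.apply_eq_zero_outside_band hi, zero_mul, zero_mul]

theorem eq_zero_on_band_of_mul_eq_zero (hT : T.IsUnitLowerBanded k)
    {E : Matrix (Fin p) (Fin p) R} (hE : Eᵀ = E)
    (hTE : ∀ j m : Fin p, m ≤ j → (j : ℕ) ≤ m + k → (T * E) j m = 0) :
    ∀ i j : Fin p, (i : ℕ) ≤ j + k → (j : ℕ) ≤ i + k → E i j = 0 := by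
  have hsymm (a b : Fin p) : E a b = E b a := congrFun (congrFun hE.symm a) b
  have hlower (j : Fin p) : ∀ m : Fin p, m ≤ j → (j : ℕ) ≤ m + k → E j m = 0 := by
    induction j using WellFoundedLT.induction with
    | _ j ih =>
    have hprev : ∀ v ∈ cholBand p k j, ∀ m ∈ cholBand p k j, E v m = 0 := by
      intro v hv m hm
      rw [mem_cholBand] at hv hm
      rcases le_total m v with h | h
      · exact ih v hv.1 m h (by omega)
      · rw [hsymm]; exact ih m hm.1 v h (by omega)
    have hoff : ∀ m ∈ cholBand p k j, E j m = 0 := by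
      intro m hm
      have := hTE j m (mem_cholBand.mp hm).1.le (mem_cholBand.mp hm).2
      rwa [hT.mul_apply, Finset.sum_eq_zero fun v hv => by rw [hprev v hv m hm, mul_zero],
        add_zero] at this
    intro m hmj hjm
    rcases hmj.lt_or_eq with h | rfl
    · exact hoff m (mem_cholBand.mpr ⟨h, hjm⟩)
    · have := hTE m m le_rfl hjm
      rwa [hT.mul_apply, Finset.sum_eq_zero fun v hv => by rw [hsymm, hoff v hv, mul_zero],
        add_zero] at this
  intro i j hij hji
  rcases le_total j i with h | h
  · exact hlower i j h hij
  · rw [hsymm]; exact hlower j i h hji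

end Matrix.IsUnitLowerBanded

theorem sum_mul_eq_zero_of_forall_sum_sq_le {ι : Type*} [Fintype ι] {r x : ι → ℝ}
    (h : ∀ t : ℝ, ∑ i, r i ^ 2 ≤ ∑ i, (r i + t * x i) ^ 2) : ∑ i, r i * x i = 0 := by
  have hdisc := discrim_le_zero (a := ∑ i, x i ^ 2) (b := 2 * ∑ i, r i * x i) (c := 0)
    fun t => by
      have hexp : ∑ i, (r i + t * x i) ^ 2
          = ∑ i, r i ^ 2 + ((∑ i, x i ^ 2) * (t * t) + 2 * (∑ i, r i * x i) * t) := by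
        simp only [Finset.mul_sum, Finset.sum_mul, ← Finset.sum_add_distrib]
        exact Finset.sum_congr rfl fun i _ => by ring
      linarith [h t]
  rw [discrim] at hdisc
  nlinarith

noncomputable def sampleCov {n p : ℕ} (X : Matrix (Fin n) (Fin p) ℝ) : Matrix (Fin p) (Fin p) ℝ :=
  ((1 : ℝ) / n) • (Xᵀ * X)

noncomputable def residVar {n p : ℕ} (k : ℕ) (X : Matrix (Fin n) (Fin p) ℝ)
    (T : Matrix (Fin p) (Fin p) ℝ) (j : Fin p) : ℝ :=
  (∑ i, bandResid k X T j i ^ 2) / n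

section Regression

variable {n p k : ℕ} {X : Matrix (Fin n) (Fin p) ℝ} {T : Matrix (Fin p) (Fin p) ℝ}

theorem residVar_of_val_eq_zero {j : Fin p} (hj : (j : ℕ) = 0) :
    residVar k X T j = (∑ i, X i j ^ 2) / n := by
  have : cholBand p k j = ∅ := by
    ext v; simp [mem_cholBand, Fin.lt_def, hj]
  simp [residVar, bandResid, this]

theorem sum_bandResid_mul_eq_zero {j m : Fin p}
    (hls : ∀ β : Fin p → ℝ, ∑ i, bandResid k X T j i ^ 2
      ≤ ∑ i, (X i j - ∑ v ∈ cholBand p k j, β v * X i v) ^ 2)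
    (hm : m ∈ cholBand p k j) : ∑ i, bandResid k X T j i * X i m = 0 := by
  refine sum_mul_eq_zero_of_forall_sum_sq_le fun t => ?_
  convert hls fun v => -T j v - if v = m then t else 0 using 3 with i
  simp only [sub_mul, neg_mul, ite_mul, zero_mul, Finset.sum_sub_distrib, Finset.sum_neg_distrib,
    Finset.sum_ite_eq', if_pos hm, bandResid]
  ring

theorem sum_bandResid_mul_self {j : Fin p}
    (horth : ∀ m ∈ cholBand p k j, ∑ i, bandResid k X T j i * X i m = 0) :
    ∑ i, bandResid k X T j i * X i j = ∑ i, bandResid k X T j i ^ 2 := by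
  set r := bandResid k X T j
  have hexp : ∑ i, r i ^ 2
      = ∑ i, r i * X i j + ∑ v ∈ cholBand p k j, T j v * ∑ i, r i * X i v := by
    simp only [Finset.mul_sum]
    rw [Finset.sum_comm, ← Finset.sum_add_distrib]
    refine Finset.sum_congr rfl fun i _ => ?_
    have hri : r i = X i j + ∑ v ∈ cholBand p k j, T j v * X i v := rfl
    rw [sq, hri, mul_add, Finset.mul_sum, ← hri]
    exact congrArg _ (Finset.sum_congr rfl fun v _ => by ring)
  rw [hexp, Finset.sum_eq_zero (s := cholBand p k j) fun v hv => by rw [horth v hv, mul_zero],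
    add_zero]

theorem mul_sampleCov_apply (hT : T.IsUnitLowerBanded k) (j m : Fin p) :
    (T * sampleCov X) j m = (∑ i, bandResid k X T j i * X i m) / n := by
  have hres (i : Fin n) : bandResid k X T j i = (T * Xᵀ) j i := by
    rw [hT.mul_apply]; rfl
  rw [sampleCov, Matrix.mul_smul, ← Matrix.mul_assoc, Matrix.smul_apply, mul_apply, smul_eq_mul]
  simp only [hres]
  ring

theorem inv_sub_sampleCov_eq_zero_on_band (hT : T.IsUnitLowerBanded k)
    (hls : ∀ j : Fin p, 0 < (j : ℕ) → ∀ β : Fin p → ℝ,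
      ∑ i, bandResid k X T j i ^ 2 ≤ ∑ i, (X i j - ∑ v ∈ cholBand p k j, β v * X i v) ^ 2)
    (hvar : ∀ j, residVar k X T j ≠ 0) :
    ∀ i j : Fin p, (i : ℕ) ≤ j + k → (j : ℕ) ≤ i + k →
      ((Tᵀ * (diagonal (residVar k X T))⁻¹ * T)⁻¹ - sampleCov X) i j = 0 := by
  have hTdet : IsUnit T.det := hT.det_eq_one ▸ isUnit_one
  have hDdet : IsUnit (diagonal (residVar k X T)).det := by
    rw [det_diagonal]
    exact isUnit_iff_ne_zero.mpr (Finset.prod_ne_zero_iff.mpr fun j _ => hvar j)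
  have horth (j m : Fin p) (hm : m ∈ cholBand p k j) : ∑ i, bandResid k X T j i * X i m = 0 :=
    sum_bandResid_mul_eq_zero (hls j (by have := (mem_cholBand.mp hm).1; omega)) hm
  refine hT.eq_zero_on_band_of_mul_eq_zero ?_ fun j m hmj hjm => ?_
  · simp [transpose_nonsing_inv, sampleCov, Matrix.mul_assoc]
  rw [Matrix.mul_sub, Matrix.sub_apply, mul_inv_transpose_mul_inv_mul hTdet hDdet, diagonal_mul,
    transpose_apply, mul_sampleCov_apply hT]
  rcases hmj.lt_or_eq with h | rfl
  · have := T.invertibleOfIsUnitDet hTdet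
    rw [blockTriangular_inv_of_blockTriangular hT.isLowerTriangular h,
      horth j m (mem_cholBand.mpr ⟨h, hjm⟩)]
    simp
  · rw [inv_apply_self_of_isLowerTriangular hT.isLowerTriangular hT.apply_self,
      sum_bandResid_mul_self (horth m), residVar, mul_one, sub_self]

end Regression

theorem inverse_cholesky_banding_is_constrained_mle_general
    (n p k : ℕ) (hn : 0 < n) (hp : 0 < p)
    (X : Matrix (Fin n) (Fin p) ℝ)
    (That Dhat : Matrix (Fin p) (Fin p) ℝ)
    -- `T̂` is lower triangular with unit diagonal, supported on the band
    (hT_diag : ∀ j : Fin p, That j j = 1)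
    (hT_zero : ∀ j v : Fin p, v ≠ j → v ∉ cholBand p k j → That j v = 0)
    -- the entries of `T̂` are (negated) least squares coefficients
    (hls : ∀ j : Fin p, 0 < (j : ℕ) → ∀ β : Fin p → ℝ,
      ∑ i : Fin n, (bandResid k X That j i) ^ 2
        ≤ ∑ i : Fin n, (X i j - ∑ v ∈ cholBand p k j, β v * X i v) ^ 2)
    -- the residuals are nonzero, and the first column of `X` is nonzero
    (hres : ∀ j : Fin p, 0 < (j : ℕ) → 0 < ∑ i : Fin n, (bandResid k X That j i) ^ 2)
    (hx1 : 0 < ∑ i : Fin n, (X i ⟨0, hp⟩) ^ 2)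
    -- `D̂` is diagonal, with the residual variances on the diagonal
    (hD_diag : ∀ i j : Fin p, i ≠ j → Dhat i j = 0)
    (hD_first : Dhat ⟨0, hp⟩ ⟨0, hp⟩ = (∑ i : Fin n, (X i ⟨0, hp⟩) ^ 2) / n)
    (hD_rest : ∀ j : Fin p, 0 < (j : ℕ) →
      Dhat j j = (∑ i : Fin n, (bandResid k X That j i) ^ 2) / n) :
    (Thatᵀ * Dhat⁻¹ * That).PosDef ∧
      (∀ i j : Fin p, (k : ℤ) < |((i : ℕ) : ℤ) - ((j : ℕ) : ℤ)| →
        (Thatᵀ * Dhat⁻¹ * That) i j = 0) ∧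
      ∀ Om : Matrix (Fin p) (Fin p) ℝ, Om.PosDef →
        (∀ i j : Fin p, (k : ℤ) < |((i : ℕ) : ℤ) - ((j : ℕ) : ℤ)| → Om i j = 0) →
        ((((1 : ℝ) / n) • (Xᵀ * X)) * (Thatᵀ * Dhat⁻¹ * That)).trace
            - Real.log (Thatᵀ * Dhat⁻¹ * That).det
          ≤ ((((1 : ℝ) / n) • (Xᵀ * X)) * Om).trace - Real.log Om.det := by
  have hT : That.IsUnitLowerBanded k := ⟨hT_diag, hT_zero⟩
  have hnR : (0 : ℝ) < n := Nat.cast_pos.mpr hn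
  have hDj (j : Fin p) : Dhat j j = residVar k X That j ∧ 0 < residVar k X That j := by
    rcases Nat.eq_zero_or_pos j with hj | hj
    · obtain rfl : j = ⟨0, hp⟩ := Fin.ext hj
      rw [residVar_of_val_eq_zero hj, hD_first]
      exact ⟨rfl, div_pos hx1 hnR⟩
    · exact ⟨hD_rest j hj, div_pos (hres j hj) hnR⟩
  obtain rfl : Dhat = diagonal (residVar k X That) := by
    ext i j
    rcases eq_or_ne i j with rfl | hij
    · rw [(hDj i).1, diagonal_apply_eq]
    · rw [hD_diag i j hij, diagonal_apply_ne _ hij]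
  have hPD : (Thatᵀ * (diagonal (residVar k X That))⁻¹ * That).PosDef :=
    (posDef_diagonal_iff.mpr fun j => (hDj j).2).inv.transpose_mul_mul_of_isUnit_det
      (hT.det_eq_one ▸ isUnit_one)
  have hband : (Thatᵀ * (diagonal (residVar k X That))⁻¹ * That).IsBanded k := by
    rw [inv_diagonal]; exact hT.isBanded_transpose_mul_diagonal_mul _
  have hE := inv_sub_sampleCov_eq_zero_on_band hT hls fun j => (hDj j).2.ne'
  exact ⟨hPD, hband, fun Om hOm hOmband => hPD.trace_mul_sub_log_det_le hOm
    (trace_mul_eq_zero_of_isBanded hE hband) (trace_mul_eq_zero_of_isBanded hE hOmband)⟩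

/-- Banding the modified Cholesky factor of the inverse covariance is the
constrained maximum likelihood estimator: if `T̂` carries the (negated) least squares
coefficients of each column `x_j` on its `k` immediate predecessor columns, and `D̂` the
corresponding residual variances, then `Ω̂ = T̂ᵀ D̂⁻¹ T̂` is positive definite, `k`-banded,
and minimizes `f(Ω) = tr(Σ̂Ω) − log det Ω` over all positive definite `k`-banded `Ω`,
where `Σ̂ = (1/n)XᵀX`. -/
theorem inverse_cholesky_banding_is_constrained_mle
    (n p k : ℕ) (hn : 0 < n) (hp : 0 < p) (hk : 1 ≤ k)
    (X : Matrix (Fin n) (Fin p) ℝ)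
    (That Dhat : Matrix (Fin p) (Fin p) ℝ)
    -- `T̂` is lower triangular with unit diagonal, supported on the band
    (hT_diag : ∀ j : Fin p, That j j = 1)
    (hT_zero : ∀ j v : Fin p, v ≠ j → v ∉ cholBand p k j → That j v = 0)
    -- the banded design matrices have full column rank
    (hrank : ∀ j : Fin p,
      LinearIndependent ℝ fun v : {v : Fin p // v ∈ cholBand p k j} =>
        (fun i : Fin n => X i v.1))
    -- the entries of `T̂` are (negated) least squares coefficients
    (hls : ∀ j : Fin p, 0 < (j : ℕ) → ∀ β : Fin p → ℝ,
      ∑ i : Fin n, (bandResid k X That j i) ^ 2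
        ≤ ∑ i : Fin n, (X i j - ∑ v ∈ cholBand p k j, β v * X i v) ^ 2)
    -- the residuals are nonzero, and the first column of `X` is nonzero
    (hres : ∀ j : Fin p, 0 < (j : ℕ) → 0 < ∑ i : Fin n, (bandResid k X That j i) ^ 2)
    (hx1 : 0 < ∑ i : Fin n, (X i ⟨0, hp⟩) ^ 2)
    -- `D̂` is diagonal, with the residual variances on the diagonal
    (hD_diag : ∀ i j : Fin p, i ≠ j → Dhat i j = 0)
    (hD_first : Dhat ⟨0, hp⟩ ⟨0, hp⟩ = (∑ i : Fin n, (X i ⟨0, hp⟩) ^ 2) / n)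
    (hD_rest : ∀ j : Fin p, 0 < (j : ℕ) →
      Dhat j j = (∑ i : Fin n, (bandResid k X That j i) ^ 2) / n) :
    (Thatᵀ * Dhat⁻¹ * That).PosDef ∧
      (∀ i j : Fin p, (k : ℤ) < |((i : ℕ) : ℤ) - ((j : ℕ) : ℤ)| →
        (Thatᵀ * Dhat⁻¹ * That) i j = 0) ∧
      ∀ Om : Matrix (Fin p) (Fin p) ℝ, Om.PosDef →
        (∀ i j : Fin p, (k : ℤ) < |((i : ℕ) : ℤ) - ((j : ℕ) : ℤ)| → Om i j = 0) →
        ((((1 : ℝ) / n) • (Xᵀ * X)) * (Thatᵀ * Dhat⁻¹ * That)).trace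
            - Real.log (Thatᵀ * Dhat⁻¹ * That).det
          ≤ ((((1 : ℝ) / n) • (Xᵀ * X)) * Om).trace - Real.log Om.det :=
  inverse_cholesky_banding_is_constrained_mle_general n p k hn hp X That Dhat hT_diag hT_zero hls
    hres hx1 hD_diag hD_first hD_rest
end

section
/- Let x₁, x₂, x₃ ∈ ℝⁿ with x₁ ≠ 0. Define l̂₂₁ = ⟨x₁, x₂⟩/‖x₁‖², e₂ = x₂ − l̂₂₁ x₁, and suppose e₂ ≠ 0; define l̂₃₂ = ⟨e₂, x₃⟩/‖e₂‖², e₃ = x₃ − l̂₃₂ e₂, and suppose e₃ ≠ 0; set d̂₂₂ = ‖e₂‖²/n and d̂₃₃ = ‖e₃‖²/n. For fixed l₃₂, d₂₂ > 0, d₃₃ > 0, define φ(l₂₁) = ‖x₂ − l₂₁ x₁‖²/d₂₂ + ‖x₃ + l₃₂ l₂₁ x₁ − l₃₂ x₂‖²/d₃₃. Then the derivative of φ at l̂₂₁ with l₃₂ = l̂₃₂, d₂₂ = d̂₂₂, d₃₃ = d̂₃₃ equals 2 l̂₃₂ ⟨x₁, x₃⟩ / d̂₃₃. -/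
/-!
Differentiating the two squared norms gives
`φ'(l) = -2 ⟨x₁, x₂ - l x₁⟩ / d₂₂ + 2 l₃₂ ⟨x₁, x₃ - l₃₂ (x₂ - l x₁)⟩ / d₃₃`.
At `l = l̂₂₁` the residual `x₂ - l̂₂₁ x₁` is orthogonal to `x₁` (the normal equation of the
regression of `x₂` on `x₁`), so the first term vanishes and the second reduces to
`2 l₃₂ ⟨x₁, x₃⟩ / d₃₃`.
-/

open Finset

theorem sum_mul_sub_div_sum_sq_mul_eq_zero {ι K : Type*} [Fintype ι] [Field K] [LinearOrder K]
    [IsStrictOrderedRing K] {x : ι → K} (hx : x ≠ 0) (y : ι → K) :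
    ∑ i, x i * (y i - (∑ j, x j * y j) / (∑ j, x j ^ 2) * x i) = 0 := by
  have hS : ∑ j, x j ^ 2 ≠ 0 := by
    simpa [dotProduct, sq] using dotProduct_self_eq_zero.not.mpr hx
  calc ∑ i, x i * (y i - (∑ j, x j * y j) / (∑ j, x j ^ 2) * x i)
      = ∑ i, x i * y i - (∑ j, x j * y j) / (∑ j, x j ^ 2) * ∑ i, x i ^ 2 := by
        rw [mul_sum, ← sum_sub_distrib]
        exact sum_congr rfl fun i _ => by ring
    _ = 0 := by rw [div_mul_cancel₀ _ hS, sub_self]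

theorem HasDerivAt.sum_sq {ι : Type*} [Fintype ι] {f : ι → ℝ → ℝ} {f' : ι → ℝ} {t : ℝ}
    (hf : ∀ i, HasDerivAt (f i) (f' i) t) :
    HasDerivAt (fun l => ∑ i, f i l ^ 2) (2 * ∑ i, f' i * f i t) t := by
  refine (HasDerivAt.fun_sum (u := univ) fun i _ => (hf i).fun_pow 2).congr_deriv ?_
  rw [mul_sum]
  exact sum_congr rfl fun i _ => by ring

theorem banding_partial_derivative_general
    (n : ℕ) (x₁ x₂ x₃ : Fin n → ℝ) (hx₁ : x₁ ≠ 0)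
    (l21hat l32hat d22hat d33hat : ℝ)
    (hl21 : l21hat = (∑ i : Fin n, x₁ i * x₂ i) / ∑ i : Fin n, (x₁ i) ^ 2) :
    deriv (fun l : ℝ =>
        (∑ i : Fin n, (x₂ i - l * x₁ i) ^ 2) / d22hat
          + (∑ i : Fin n, (x₃ i + l32hat * l * x₁ i - l32hat * x₂ i) ^ 2) / d33hat)
        l21hat
      = 2 * l32hat * (∑ i : Fin n, x₁ i * x₃ i) / d33hat := by
  have hφ := ((HasDerivAt.sum_sq fun i =>
      (hasDerivAt_mul_const (x₁ i)).const_sub (x₂ i)).div_const d22hat).add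
    ((HasDerivAt.sum_sq fun i =>
      ((((hasDerivAt_id' l21hat).const_mul l32hat).mul_const (x₁ i)).const_add
        (x₃ i)).sub_const (l32hat * x₂ i)).div_const d33hat)
  refine hφ.deriv.trans ?_
  have h_normal : ∑ i, x₁ i * (x₂ i - l21hat * x₁ i) = 0 := by
    rw [hl21]; exact sum_mul_sub_div_sum_sq_mul_eq_zero hx₁ x₂
  have h_first : ∑ i, -x₁ i * (x₂ i - l21hat * x₁ i) = 0 := by
    simp only [neg_mul, sum_neg_distrib, h_normal, neg_zero]
  have h_second : ∑ i, l32hat * 1 * x₁ i * (x₃ i + l32hat * l21hat * x₁ i - l32hat * x₂ i)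
      = l32hat * ∑ i, x₁ i * x₃ i :=
    calc _ = ∑ i, (l32hat * (x₁ i * x₃ i) - l32hat ^ 2 * (x₁ i * (x₂ i - l21hat * x₁ i))) :=
          sum_congr rfl fun i _ => by ring
      _ = _ := by rw [sum_sub_distrib, ← mul_sum, ← mul_sum, h_normal, mul_zero, sub_zero]
  rw [h_first, h_second]
  ring

/-- In the `p = 3` counterexample, the partial derivative of the
(constrained) negative log-likelihood with respect to `l₂₁`, evaluated at the covariance
Cholesky banding solution, equals `2 l̂₃₂ ⟨x₁, x₃⟩ / d̂₃₃`. (Euclidean inner products and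
squared norms are written as sums.) -/
theorem banding_partial_derivative
    (n : ℕ) (x₁ x₂ x₃ : Fin n → ℝ) (hx₁ : x₁ ≠ 0)
    (l21hat l32hat d22hat d33hat : ℝ) (e₂ e₃ : Fin n → ℝ)
    (hl21 : l21hat = (∑ i : Fin n, x₁ i * x₂ i) / ∑ i : Fin n, (x₁ i) ^ 2)
    (he₂ : e₂ = fun i => x₂ i - l21hat * x₁ i) (he₂0 : e₂ ≠ 0)
    (hl32 : l32hat = (∑ i : Fin n, e₂ i * x₃ i) / ∑ i : Fin n, (e₂ i) ^ 2)
    (he₃ : e₃ = fun i => x₃ i - l32hat * e₂ i) (he₃0 : e₃ ≠ 0)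
    (hd22 : d22hat = (∑ i : Fin n, (e₂ i) ^ 2) / n)
    (hd33 : d33hat = (∑ i : Fin n, (e₃ i) ^ 2) / n) :
    deriv (fun l : ℝ =>
        (∑ i : Fin n, (x₂ i - l * x₁ i) ^ 2) / d22hat
          + (∑ i : Fin n, (x₃ i + l32hat * l * x₁ i - l32hat * x₂ i) ^ 2) / d33hat)
        l21hat
      = 2 * l32hat * (∑ i : Fin n, x₁ i * x₃ i) / d33hat :=
  banding_partial_derivative_general n x₁ x₂ x₃ hx₁ l21hat l32hat d22hat d33hat hl21
end

section
/- Banding the modified Cholesky factor of the covariance matrix does not maximize the constrained normal likelihood: Let x₁, x₂, x₃ ∈ ℝⁿ with x₁ ≠ 0. Define l̂₂₁ = ⟨x₁, x₂⟩/‖x₁‖², e₂ = x₂ − l̂₂₁ x₁ ≠ 0, l̂₃₂ = ⟨e₂, x₃⟩/‖e₂‖², e₃ = x₃ − l̂₃₂ e₂ ≠ 0, d̂₁₁ = ‖x₁‖²/n, d̂₂₂ = ‖e₂‖²/n, d̂₃₃ = ‖e₃‖²/n. Define b(l₂₁, l₃₂, d₁₁, d₂₂, d₃₃) = n(log d₁₁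 + log d₂₂ + log d₃₃) + ‖x₁‖²/d₁₁ + ‖x₂ − l₂₁ x₁‖²/d₂₂ + ‖x₃ + l₃₂ l₂₁ x₁ − l₃₂ x₂‖²/d₃₃. If l̂₃₂ · ⟨x₁, x₃⟩ ≠ 0, then there exists l₂₁ ∈ ℝ with b(l₂₁, l̂₃₂, d̂₁₁, d̂₂₂, d̂₃₃) < b(l̂₂₁, l̂₃₂, d̂₁₁, d̂₂₂, d̂₃₃); in particular the banding solution (l̂₂₁, l̂₃₂, d̂₁₁, d̂₂₂, d̂₃₃) does not minimize b. -/
/-!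
Write `l = l̂₂₁ + t`. Since `e₂ = x₂ - l̂₂₁ x₁` is orthogonal to `x₁`, the two residuals become
`e₂ - t x₁` and `e₃ + l̂₃₂ t x₁`, and `⟨x₁, e₃⟩ = ⟨x₁, x₃⟩`. Hence `b` changes by `a t² + c t`
for some `a`, with `c = 2 l̂₃₂ ⟨x₁, x₃⟩ / d̂₃₃ ≠ 0`: the linear term does not vanish at `t = 0`,
so `l̂₂₁` is not even a critical point of `b` in the `l₂₁` direction.
-/

open Finset

section Residuals

variable {ι : Type*} [Fintype ι]

theorem sum_mul_sub_mul_eq_zero_of_eq_div {u v : ι → ℝ} {l : ℝ}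
    (hl : l = (∑ i, u i * v i) / ∑ i, u i ^ 2) :
    ∑ i, u i * (v i - l * u i) = 0 := by
  have hsplit : ∑ i, u i * (v i - l * u i) = ∑ i, u i * v i - l * ∑ i, u i ^ 2 := by
    simp only [mul_sub, sum_sub_distrib, mul_sum]
    congr 1
    exact sum_congr rfl fun i _ => by ring
  by_cases hu : ∑ i, u i ^ 2 = 0
  · have hzero : ∀ i, u i = 0 := fun i =>
      (sum_mul_self_eq_zero_iff _ u).mp (by simpa only [sq] using hu) i (mem_univ i)
    simp [hzero]
  · rw [hsplit, hl, div_mul_cancel₀ _ hu, sub_self]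

theorem sum_add_mul_sq (e u : ι → ℝ) (s : ℝ) :
    ∑ i, (e i + s * u i) ^ 2
      = ∑ i, e i ^ 2 + 2 * s * ∑ i, u i * e i + s ^ 2 * ∑ i, u i ^ 2 := by
  simp only [add_sq, sum_add_distrib, mul_sum]
  congr 1
  · congr 1
    exact sum_congr rfl fun i _ => by ring
  · exact sum_congr rfl fun i _ => by ring

theorem sum_sq_ne_zero {v : ι → ℝ} (hv : v ≠ 0) : ∑ i, v i ^ 2 ≠ 0 := by
  simpa [dotProduct, sq] using dotProduct_self_eq_zero.not.mpr hv

end Residuals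

theorem exists_mul_sq_add_mul_neg (a : ℝ) {c : ℝ} (hc : c ≠ 0) : ∃ t, a * t ^ 2 + c * t < 0 := by
  have hpos : 0 < |a| + 1 := by positivity
  have hlt : a / (|a| + 1) < 1 := (div_lt_one hpos).mpr (by linarith [le_abs_self a])
  refine ⟨-c / (|a| + 1), ?_⟩
  have hexpand : a * (-c / (|a| + 1)) ^ 2 + c * (-c / (|a| + 1))
      = -(c ^ 2 * (1 - a / (|a| + 1)) / (|a| + 1)) := by
    field_simp
    ring
  rw [hexpand, neg_lt_zero]
  have : 0 < 1 - a / (|a| + 1) := by linarith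
  positivity

theorem covariance_cholesky_banding_not_mle_general
    (n : ℕ) (x₁ x₂ x₃ : Fin n → ℝ)
    (l21hat l32hat d11hat d22hat d33hat : ℝ) (e₂ e₃ : Fin n → ℝ)
    (hl21 : l21hat = (∑ i : Fin n, x₁ i * x₂ i) / ∑ i : Fin n, (x₁ i) ^ 2)
    (he₂ : e₂ = fun i => x₂ i - l21hat * x₁ i)
    (he₃ : e₃ = fun i => x₃ i - l32hat * e₂ i) (he₃0 : e₃ ≠ 0)
    (hd33 : d33hat = (∑ i : Fin n, (e₃ i) ^ 2) / n)
    (hne : l32hat * (∑ i : Fin n, x₁ i * x₃ i) ≠ 0) :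
    ∃ l : ℝ,
      ((n : ℝ) * (Real.log d11hat + Real.log d22hat + Real.log d33hat)
          + (∑ i : Fin n, (x₁ i) ^ 2) / d11hat
          + (∑ i : Fin n, (x₂ i - l * x₁ i) ^ 2) / d22hat
          + (∑ i : Fin n, (x₃ i + l32hat * l * x₁ i - l32hat * x₂ i) ^ 2) / d33hat)
        < ((n : ℝ) * (Real.log d11hat + Real.log d22hat + Real.log d33hat)
          + (∑ i : Fin n, (x₁ i) ^ 2) / d11hat
          + (∑ i : Fin n, (x₂ i - l21hat * x₁ i) ^ 2) / d22hat
          + (∑ i : Fin n, (x₃ i + l32hat * l21hat * x₁ i - l32hat * x₂ i) ^ 2) / d33hat) := by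
  obtain ⟨i₀, -⟩ := Function.ne_iff.mp he₃0
  have hd33_ne : d33hat ≠ 0 :=
    hd33 ▸ div_ne_zero (sum_sq_ne_zero he₃0) (by exact_mod_cast i₀.pos.ne')
  have horth : ∑ i, x₁ i * e₂ i = 0 := he₂ ▸ sum_mul_sub_mul_eq_zero_of_eq_div hl21
  have hx₁e₃ : ∑ i, x₁ i * e₃ i = ∑ i, x₁ i * x₃ i := by
    simp only [he₃, mul_sub, sum_sub_distrib, mul_left_comm (x₁ _) l32hat, ← mul_sum, horth,
      mul_zero, sub_zero]
  have hsecond (l : ℝ) : ∑ i, (x₂ i - l * x₁ i) ^ 2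
      = ∑ i, e₂ i ^ 2 + (l - l21hat) ^ 2 * ∑ i, x₁ i ^ 2 := by
    rw [show (fun i => (x₂ i - l * x₁ i) ^ 2) = fun i => (e₂ i + (l21hat - l) * x₁ i) ^ 2 by
      subst he₂; ext; ring, sum_add_mul_sq, horth]
    ring
  have hthird (l : ℝ) : ∑ i, (x₃ i + l32hat * l * x₁ i - l32hat * x₂ i) ^ 2
      = ∑ i, e₃ i ^ 2 + 2 * (l32hat * (l - l21hat)) * ∑ i, x₁ i * x₃ i
        + (l32hat * (l - l21hat)) ^ 2 * ∑ i, x₁ i ^ 2 := by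
    rw [show (fun i => (x₃ i + l32hat * l * x₁ i - l32hat * x₂ i) ^ 2)
        = fun i => (e₃ i + l32hat * (l - l21hat) * x₁ i) ^ 2 by
      subst he₃ he₂; ext; ring, sum_add_mul_sq, hx₁e₃]
  obtain ⟨t, ht⟩ := exists_mul_sq_add_mul_neg
    ((∑ i, x₁ i ^ 2) / d22hat + l32hat ^ 2 * (∑ i, x₁ i ^ 2) / d33hat)
    (div_ne_zero (mul_ne_zero two_ne_zero hne) hd33_ne)
  refine ⟨l21hat + t, ?_⟩
  rw [hsecond, hsecond, hthird, hthird]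
  linear_combination ht

/-- Banding the modified Cholesky factor of the covariance does not
maximize the constrained normal likelihood: in the `p = 3` example, whenever
`l̂₃₂ ⟨x₁, x₃⟩ ≠ 0`, the banding solution `(l̂₂₁, l̂₃₂, d̂₁₁, d̂₂₂, d̂₃₃)` can be strictly
improved in the `l₂₁` coordinate, so it does not minimize the negative log-likelihood
`b`. (Euclidean inner products and squared norms are written as sums.) -/
theorem covariance_cholesky_banding_not_mle
    (n : ℕ) (x₁ x₂ x₃ : Fin n → ℝ) (hx₁ : x₁ ≠ 0)
    (l21hat l32hat d11hat d22hat d33hat : ℝ) (e₂ e₃ : Fin n → ℝ)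
    (hl21 : l21hat = (∑ i : Fin n, x₁ i * x₂ i) / ∑ i : Fin n, (x₁ i) ^ 2)
    (he₂ : e₂ = fun i => x₂ i - l21hat * x₁ i) (he₂0 : e₂ ≠ 0)
    (hl32 : l32hat = (∑ i : Fin n, e₂ i * x₃ i) / ∑ i : Fin n, (e₂ i) ^ 2)
    (he₃ : e₃ = fun i => x₃ i - l32hat * e₂ i) (he₃0 : e₃ ≠ 0)
    (hd11 : d11hat = (∑ i : Fin n, (x₁ i) ^ 2) / n)
    (hd22 : d22hat = (∑ i : Fin n, (e₂ i) ^ 2) / n)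
    (hd33 : d33hat = (∑ i : Fin n, (e₃ i) ^ 2) / n)
    (hne : l32hat * (∑ i : Fin n, x₁ i * x₃ i) ≠ 0) :
    ∃ l : ℝ,
      ((n : ℝ) * (Real.log d11hat + Real.log d22hat + Real.log d33hat)
          + (∑ i : Fin n, (x₁ i) ^ 2) / d11hat
          + (∑ i : Fin n, (x₂ i - l * x₁ i) ^ 2) / d22hat
          + (∑ i : Fin n, (x₃ i + l32hat * l * x₁ i - l32hat * x₂ i) ^ 2) / d33hat)
        < ((n : ℝ) * (Real.log d11hat + Real.log d22hat + Real.log d33hat)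
          + (∑ i : Fin n, (x₁ i) ^ 2) / d11hat
          + (∑ i : Fin n, (x₂ i - l21hat * x₁ i) ^ 2) / d22hat
          + (∑ i : Fin n, (x₃ i + l32hat * l21hat * x₁ i - l32hat * x₂ i) ^ 2) / d33hat) :=
  covariance_cholesky_banding_not_mle_general n x₁ x₂ x₃ l21hat l32hat d11hat d22hat d33hat e₂ e₃
    hl21 he₂ he₃ he₃0 hd33 hne
end

section
/- Let Σ be a real positive definite p×p matrix with modified Cholesky decomposition Σ = L D Lᵀ, where L is lower triangular with unit diagonal and D is diagonal. Suppose L has the nested zero structure: for every row j and every t with t + 1 < j, l_{j,t+1} = 0 implies l_{j,t} = 0. Then every zero of L below the diagonal is preserved in Σ: for all t < j, l_{j,t} = 0 implies σ_{j,t} = 0. -/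
open Matrix

/-!
Expanding `Σ = L D Lᵀ` with `D` diagonal gives `σ_{j,t} = ∑ₖ l_{j,k} d_k l_{t,k}`. Lower triangularity
kills the terms with `k > t`, and the nested structure propagates the zero `l_{j,t} = 0` down the row
to every `l_{j,k}` with `k ≤ t`, which kills the remaining terms.
-/

theorem Fin.decreasing_induction {p : ℕ} {P : Fin p → Prop} {u : Fin p}
    (hstep : ∀ t s : Fin p, (s : ℕ) = t + 1 → s ≤ u → P s → P t) (hu : P u) :
    ∀ k ≤ u, P k := by
  suffices h : ∀ n : ℕ, ∀ k : Fin p, (k : ℕ) + n = u → P k from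
    fun k hk => h (u - k) k (by omega)
  intro n
  induction n with
  | zero => intro k hk; rwa [show k = u from Fin.ext (by omega)]
  | succ n ih =>
    intro k hk
    have hk1 : (k : ℕ) + 1 < p := by omega
    exact hstep k ⟨k + 1, hk1⟩ rfl (Fin.mk_le_of_le_val (by omega)) (ih _ (by simp; omega))

theorem Matrix.mul_diagonal_mul_transpose_apply_eq_zero {n α : Type*} [Fintype n] [DecidableEq n]
    [Semiring α] (L : Matrix n n α) (d : n → α) {i j : n}
    (hdisj : ∀ k, L i k = 0 ∨ L j k = 0) : (L * diagonal d * Lᵀ) i j = 0 := by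
  rw [mul_apply]
  refine Finset.sum_eq_zero fun k _ => ?_
  rcases hdisj k with h | h <;> simp [h]

theorem nested_zeros_preserved_general
    (p : ℕ) (S L D : Matrix (Fin p) (Fin p) ℝ)
    (hL_lower : ∀ i j : Fin p, i < j → L i j = 0)
    (hD_diag : ∀ i j : Fin p, i ≠ j → D i j = 0)
    (hdecomp : S = L * D * Lᵀ)
    (hnested : ∀ j t s : Fin p, (s : ℕ) = (t : ℕ) + 1 → s < j → L j s = 0 → L j t = 0) :
    ∀ j t : Fin p, t < j → L j t = 0 → S j t = 0 := by
  intro j t htj hzero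
  have hrow : ∀ k ≤ t, L j k = 0 := Fin.decreasing_induction
    (fun k s hs hst => hnested j k s hs (hst.trans_lt htj)) hzero
  rw [hdecomp, ← IsDiag.diagonal_diag (A := D) hD_diag]
  refine mul_diagonal_mul_transpose_apply_eq_zero L _ fun k => ?_
  rcases le_or_gt k t with hk | hk
  · exact .inl (hrow k hk)
  · exact .inr (hL_lower t k hk)

/-- If the modified Cholesky factor `L` of a positive definite
`Σ = L D Lᵀ` has the nested zero structure (within each row, `l_{j,t+1} = 0` implies
`l_{j,t} = 0`), then every below-diagonal zero of `L` is preserved in `Σ`. -/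
theorem nested_zeros_preserved
    (p : ℕ) (S L D : Matrix (Fin p) (Fin p) ℝ)
    (hS : S.PosDef)
    (hL_lower : ∀ i j : Fin p, i < j → L i j = 0)
    (hL_diag : ∀ i : Fin p, L i i = 1)
    (hD_diag : ∀ i j : Fin p, i ≠ j → D i j = 0)
    (hdecomp : S = L * D * Lᵀ)
    (hnested : ∀ j t s : Fin p, (s : ℕ) = (t : ℕ) + 1 → s < j → L j s = 0 → L j t = 0) :
    ∀ j t : Fin p, t < j → L j t = 0 → S j t = 0 :=
  nested_zeros_preserved_general p S L D hL_lower hD_diag hdecomp hnested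
end
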